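/- arXiv:1805.06196 — 2 statements merged into one kernel-verified Lean document; each statement's English description precedes it below -/
import Mathlib

section
/- Let B := fr ∩ po_i. Assume rf ⊆ W × R, mo ⊆ W × W, and R ∩ W = ∅. Then B ; si-hb ⊆ si-hb and si-hb ; B ⊆ si-hb. -/
variable {E : Type*} {TxId : Type*} {Loc : Type*}

/-- Same-transaction relation: both events are transactional with equal transaction ids. -/
def St (tx : E → Option TxId) : E → E → Prop :=
  fun a b => ∃ t, tx a = some t ∧ tx b = some t

/-- Transaction lifting `r_T := st ; (r \ st) ; st`. -/
def RLift (tx : E → Option TxId) (r : E → E → Prop) : E → E → Prop :=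
  fun a b => ∃ c d, St tx a c ∧ r c d ∧ ¬ St tx c d ∧ St tx d b

/-- Reads-before relation `fr := (rf⁻¹ ; mo) \ id`. -/
def Fr (rf mo : E → E → Prop) : E → E → Prop :=
  fun a b => (∃ w, rf w a ∧ mo w b) ∧ a ≠ b

/-- Externally-reading reads: `toutR := codom (rf \ st)`. -/
def ToutR (tx : E → Option TxId) (rf : E → E → Prop) : Set E :=
  { b | ∃ a, rf a b ∧ ¬ St tx a b }

/-- `si-rb := [toutR] ; fr_T ; [W]`. -/
def SiRb (tx : E → Option TxId) (W : Set E) (rf mo : E → E → Prop) : E → E → Prop :=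
  fun a b => a ∈ ToutR tx rf ∧ RLift tx (Fr rf mo) a b ∧ b ∈ W

/-- SI happens-before: `si-hb := (po_T ∪ rf_T ∪ mo_T ∪ si-rb)⁺`. -/
def SiHb (tx : E → Option TxId) (W : Set E) (po rf mo : E → E → Prop) : E → E → Prop :=
  Relation.TransGen (fun a b =>
    RLift tx po a b ∨ RLift tx rf a b ∨ RLift tx mo a b ∨ SiRb tx W rf mo a b)

/-- Non-transactional events. -/
def NTset (tx : E → Option TxId) : Set E := { e | tx e = none }

/-- `rsi-po := (po \ po_i) ∪ ([W] ; po_i ; [W])`. -/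
def RsiPo (tx : E → Option TxId) (W : Set E) (po : E → E → Prop) : E → E → Prop :=
  fun a b => (po a b ∧ ¬ St tx a b) ∨ (a ∈ W ∧ (po a b ∧ St tx a b) ∧ b ∈ W)

/-- `rsi-rf := (rf ; [NT]) ∪ ([NT] ; rf ; st) ∪ rf_T ∪ (mo ; rf)_T`. -/
def RsiRf (tx : E → Option TxId) (rf mo : E → E → Prop) : E → E → Prop :=
  fun a b =>
    (rf a b ∧ b ∈ NTset tx) ∨
    (a ∈ NTset tx ∧ ∃ c, rf a c ∧ St tx c b) ∨
    RLift tx rf a b ∨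
    RLift tx (fun x y => ∃ z, mo x z ∧ rf z y) a b

/-- RSI happens-before: `rsi-hb := (rsi-po ∪ rsi-rf ∪ mo_T ∪ si-rb)⁺`. -/
def RsiHb (tx : E → Option TxId) (W : Set E) (po rf mo : E → E → Prop) : E → E → Prop :=
  Relation.TransGen (fun a b =>
    RsiPo tx W po a b ∨ RsiRf tx rf mo a b ∨ RLift tx mo a b ∨ SiRb tx W rf mo a b)

/-- Internal consistency axiom: `rf_i ∪ mo_i ∪ fr_i ⊆ po`. -/
def INTax (tx : E → Option TxId) (po rf mo : E → E → Prop) : Prop :=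
  ∀ a b, (rf a b ∨ mo a b ∨ Fr rf mo a b) → St tx a b → po a b

/-- Acyclicity: the transitive closure is irreflexive. -/
def Acyclic (r : E → E → Prop) : Prop := ∀ a, ¬ Relation.TransGen r a a

/-- SI-consistency: INT together with acyclicity of `(po_T ∪ rf_T ∪ mo_T) ; fr_T^?`. -/
def SIConsistent (tx : E → Option TxId) (po rf mo : E → E → Prop) : Prop :=
  INTax tx po rf mo ∧
  Acyclic (fun a c => ∃ b,
    (RLift tx po a b ∨ RLift tx rf a b ∨ RLift tx mo a b) ∧
    (RLift tx (Fr rf mo) b c ∨ b = c))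

/-- RSI-consistency: INT together with acyclicity of `rsi-hb|loc ∪ mo ∪ fr`. -/
def RSIConsistent (tx : E → Option TxId) (W : Set E) (loc : E → Loc)
    (po rf mo : E → E → Prop) : Prop :=
  INTax tx po rf mo ∧
  Acyclic (fun a b =>
    (RsiHb tx W po rf mo a b ∧ loc a = loc b) ∨ mo a b ∨ Fr rf mo a b)

lemma st_trans' {E TxId : Type*} {tx : E → Option TxId} {a b c : E}
    (h1 : St tx a b) (h2 : St tx b c) : St tx a c := by
  obtain ⟨t, ha, hb⟩ := h1
  obtain ⟨t', hb', hc⟩ := h2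
  rw [hb] at hb'
  exact ⟨t, ha, by rw [hc, Option.some_inj.mp hb']⟩

/-- with `B := fr ∩ po_i`, assuming `rf ⊆ W × R`, `mo ⊆ W × W` and
`R ∩ W = ∅`, we have `B ; si-hb ⊆ si-hb` and `si-hb ; B ⊆ si-hb`. -/
theorem stmt7 {E TxId : Type*} (R W : Set E) (tx : E → Option TxId)
    (po rf mo : E → E → Prop)
    (hrfWR : ∀ a b, rf a b → a ∈ W ∧ b ∈ R)
    (hmoWW : ∀ a b, mo a b → a ∈ W ∧ b ∈ W)
    (hRW : R ∩ W = ∅) :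
    (∀ a b, (∃ c, (Fr rf mo a c ∧ (po a c ∧ St tx a c)) ∧ SiHb tx W po rf mo c b) →
        SiHb tx W po rf mo a b) ∧
    (∀ a b, (∃ c, SiHb tx W po rf mo a c ∧ (Fr rf mo c b ∧ (po c b ∧ St tx c b))) →
        SiHb tx W po rf mo a b) := by
  have hdisj : ∀ x : E, x ∈ R → x ∈ W → False := fun x hr hw =>
    Set.eq_empty_iff_forall_notMem.mp hRW x ⟨hr, hw⟩
  constructor
  · rintro a b ⟨c, ⟨⟨⟨w, hrf, hmo⟩, _⟩, _, hst⟩, hhb⟩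
    have hcW : c ∈ W := (hmoWW w c hmo).2
    -- replace first endpoint of a generator step
    have repl : ∀ x, (RLift tx po c x ∨ RLift tx rf c x ∨ RLift tx mo c x ∨
        SiRb tx W rf mo c x) →
        (RLift tx po a x ∨ RLift tx rf a x ∨ RLift tx mo a x ∨ SiRb tx W rf mo a x) := by
      rintro x (⟨c', d', h1, h2⟩ | ⟨c', d', h1, h2⟩ | ⟨c', d', h1, h2⟩ |
        ⟨⟨w', hrf', _⟩, _, _⟩)
      · exact Or.inl ⟨c', d', st_trans' hst h1, h2⟩
      · exact Or.inr (Or.inl ⟨c', d', st_trans' hst h1, h2⟩)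
      · exact Or.inr (Or.inr (Or.inl ⟨c', d', st_trans' hst h1, h2⟩))
      · exact absurd hcW (fun h => hdisj c (hrfWR w' c hrf').2 h)
    obtain ⟨d, h1, h2⟩ := Relation.TransGen.head'_iff.mp hhb
    exact Relation.TransGen.head' (repl d h1) h2
  · rintro a b ⟨c, hhb, ⟨⟨w, hrf, hmo⟩, _⟩, _, hst⟩
    have hcR : c ∈ R := (hrfWR w c hrf).2
    have repl : ∀ x, (RLift tx po x c ∨ RLift tx rf x c ∨ RLift tx mo x c ∨
        SiRb tx W rf mo x c) →
        (RLift tx po x b ∨ RLift tx rf x b ∨ RLift tx mo x b ∨ SiRb tx W rf mo x b) := by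
      rintro x (⟨c', d', h1, h2, h3, h4⟩ | ⟨c', d', h1, h2, h3, h4⟩ |
        ⟨c', d', h1, h2, h3, h4⟩ | ⟨_, _, hW⟩)
      · exact Or.inl ⟨c', d', h1, h2, h3, st_trans' h4 hst⟩
      · exact Or.inr (Or.inl ⟨c', d', h1, h2, h3, st_trans' h4 hst⟩)
      · exact Or.inr (Or.inr (Or.inl ⟨c', d', h1, h2, h3, st_trans' h4 hst⟩))
      · exact absurd hW (fun h => hdisj c hcR h)
    cases hhb with
    | single h => exact Relation.TransGen.single (repl a h)
    | tail h1 h2 => exact Relation.TransGen.tail h1 (repl _ h2)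
end

section
/- If transactions form po-convex blocks, i.e. po_T ⊆ po, then si-hb ⊆ rsi-hb. Consequently, if rsi-hb|loc ∪ mo ∪ fr is acyclic, then si-hb is irreflexive. -/
variable {E : Type*} {TxId : Type*} {Loc : Type*}

/-!
Every generator of si-hb is a generator of rsi-hb: rf_T, mo_T and si-rb occur verbatim, and a
po_T edge joins events of different transactions, so by convexity it lies in po \ po_i ⊆ rsi-po.
Irreflexivity follows because a loop of si-hb is a loop of rsi-hb|loc.
-/

theorem St.symm {tx : E → Option TxId} {a b : E} (h : St tx a b) : St tx b a :=
  let ⟨t, ha, hb⟩ := h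
  ⟨t, hb, ha⟩

theorem St.trans {tx : E → Option TxId} {a b c : E} (hab : St tx a b) (hbc : St tx b c) :
    St tx a c :=
  let ⟨t, ha, hb⟩ := hab
  let ⟨_, hb', hc⟩ := hbc
  ⟨t, ha, hc.trans (hb'.symm.trans hb)⟩

theorem RLift.not_st {tx : E → Option TxId} {r : E → E → Prop} {a b : E}
    (h : RLift tx r a b) : ¬ St tx a b := by
  obtain ⟨c, d, hac, -, hncd, hdb⟩ := h
  exact fun hab => hncd (hac.symm.trans (hab.trans hdb.symm))

section Inclusion

variable {tx : E → Option TxId} {W : Set E} {po rf mo : E → E → Prop}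

theorem rsiPo_of_rLift (hconv : ∀ a b, RLift tx po a b → po a b) {a b : E}
    (h : RLift tx po a b) : RsiPo tx W po a b :=
  Or.inl ⟨hconv a b h, h.not_st⟩

theorem rsiRf_of_rLift {a b : E} (h : RLift tx rf a b) : RsiRf tx rf mo a b :=
  Or.inr (Or.inr (Or.inl h))

theorem siHb_le_rsiHb (hconv : ∀ a b, RLift tx po a b → po a b) {a b : E}
    (h : SiHb tx W po rf mo a b) : RsiHb tx W po rf mo a b :=
  Relation.TransGen.mono (fun _ _ =>
    Or.imp (rsiPo_of_rLift hconv) (Or.imp rsiRf_of_rLift id)) a b h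

end Inclusion

theorem Acyclic.irrefl_of_locRestrict {r s : E → E → Prop} {loc : E → Loc}
    (h : Acyclic (fun a b => (r a b ∧ loc a = loc b) ∨ s a b)) (a : E) : ¬ r a a :=
  fun ha => h a (.single (.inl ⟨ha, rfl⟩))

theorem stmt10_general {E TxId Loc : Type*} (W : Set E) (loc : E → Loc)
    (tx : E → Option TxId) (po rf mo : E → E → Prop)
    (hconv : ∀ a b, RLift tx po a b → po a b) :
    (∀ a b, SiHb tx W po rf mo a b → RsiHb tx W po rf mo a b) ∧
    (Acyclic (fun a b =>
        (RsiHb tx W po rf mo a b ∧ loc a = loc b) ∨ mo a b ∨ Fr rf mo a b) →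
      Irreflexive (SiHb tx W po rf mo)) :=
  ⟨fun _ _ => siHb_le_rsiHb hconv,
    fun hacyc a ha => hacyc.irrefl_of_locRestrict a (siHb_le_rsiHb hconv ha)⟩

/-- if transactions form po-convex blocks (`po_T ⊆ po`) then
`si-hb ⊆ rsi-hb`; consequently, if `rsi-hb|loc ∪ mo ∪ fr` is acyclic then `si-hb` is
irreflexive. -/
theorem stmt10 {E TxId Loc : Type*} (R W : Set E) (loc : E → Loc)
    (tx : E → Option TxId) (po rf mo : E → E → Prop)
    (hconv : ∀ a b, RLift tx po a b → po a b) :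
    (∀ a b, SiHb tx W po rf mo a b → RsiHb tx W po rf mo a b) ∧
    (Acyclic (fun a b =>
        (RsiHb tx W po rf mo a b ∧ loc a = loc b) ∨ mo a b ∨ Fr rf mo a b) →
      Irreflexive (SiHb tx W po rf mo)) :=
  stmt10_general W loc tx po rf mo hconv
end
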